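/- Let Λ ⊆ E be an f-invariant set admitting a hyperbolic splitting (S, U, C, λ). Then for every x ∈ Λ the stable subspace is characterized dynamically: S(x) = {v ∈ E : sup_{n ≥ 0} ‖Dfⁿ(x)v‖ < ∞}. -/

import Mathlib

open Function Set Filter Topology

/-- The derivative of the `n`-th iterate of `f` (inverse iterates use the inverse map `g`)
at the point `x`, for `n : ℤ`. -/
noncomputable def Dfn {E : Type*} [NormedAddCommGroup E] [NormedSpace ℝ E]
    (f g : E → E) (n : ℤ) (x : E) : E →L[ℝ] E :=
  if 0 ≤ n then fderiv ℝ (f^[n.toNat]) x else fderiv ℝ (g^[(-n).toNat]) x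

/-- `f` is a C¹ diffeomorphism with inverse `g`. -/
def IsC1Diffeo {E : Type*} [NormedAddCommGroup E] [NormedSpace ℝ E] (f g : E → E) : Prop :=
  ContDiff ℝ 1 f ∧ ContDiff ℝ 1 g ∧ Function.LeftInverse g f ∧ Function.RightInverse g f

/-- A hyperbolic splitting `(S, U, C, lam)` for `f` (with inverse `g`) over an invariant
set `Λ`. -/
structure HypSplit {E : Type*} [NormedAddCommGroup E] [NormedSpace ℝ E]
    (f g : E → E) (Λ : Set E) (S U : E → Submodule ℝ E) (C lam : ℝ) : Prop where
  one_le_C : 1 ≤ C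
  lam_pos : 0 < lam
  lam_lt_one : lam < 1
  isCompl : ∀ x ∈ Λ, IsCompl (S x) (U x)
  mapS : ∀ x ∈ Λ, (S x).map (fderiv ℝ f x).toLinearMap = S (f x)
  mapU : ∀ x ∈ Λ, (U x).map (fderiv ℝ f x).toLinearMap = U (f x)
  stable : ∀ x ∈ Λ, ∀ v ∈ S x, ∀ n : ℕ, ‖Dfn f g (n : ℤ) x v‖ ≤ C * lam ^ n * ‖v‖
  unstable : ∀ x ∈ Λ, ∀ v ∈ U x, ∀ n : ℕ, ‖Dfn f g (-(n : ℤ)) x v‖ ≤ C * lam ^ n * ‖v‖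

/-- `f` (with inverse `g`) is quasi-Anosov on `Λ`: for every `x ∈ Λ` and every nonzero
`v`, the set `{‖Dfⁿ(x)v‖ : n ∈ ℤ}` is unbounded. -/
def QuasiAnosovOn {E : Type*} [NormedAddCommGroup E] [NormedSpace ℝ E]
    (f g : E → E) (Λ : Set E) : Prop :=
  ∀ x ∈ Λ, ∀ v : E, v ≠ 0 → ¬ BddAbove (Set.range fun n : ℤ => ‖Dfn f g n x v‖)

section Aux

variable {E : Type*} [NormedAddCommGroup E] [NormedSpace ℝ E]

lemma Dfn_natCast (f g : E → E) (n : ℕ) (x : E) :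
    Dfn f g (n : ℤ) x = fderiv ℝ (f^[n]) x := by
  simp [Dfn]

lemma Dfn_neg_natCast (f g : E → E) (n : ℕ) (x : E) :
    Dfn f g (-(n : ℤ)) x = fderiv ℝ (g^[n]) x := by
  rcases Nat.eq_zero_or_pos n with h | h
  · subst h; simp [Dfn]
  · rw [Dfn, if_neg (by omega)]
    simp

lemma fderiv_iterate_succ {f : E → E} (hf : Differentiable ℝ f) (n : ℕ) (x : E) :
    fderiv ℝ (f^[n + 1]) x = (fderiv ℝ f (f^[n] x)).comp (fderiv ℝ (f^[n]) x) := by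
  rw [Function.iterate_succ']
  exact fderiv_comp (x := x) (hf _) (hf.iterate n x)

lemma iterate_mem_of_image_eq {f : E → E} {Λ : Set E} (hΛ : f '' Λ = Λ)
    {x : E} (hx : x ∈ Λ) (n : ℕ) : f^[n] x ∈ Λ := by
  induction n with
  | zero => simpa
  | succ n ih =>
    rw [Function.iterate_succ_apply', ← hΛ]
    exact ⟨_, ih, rfl⟩

lemma iterate_mapU {f g : E → E} {Λ : Set E} {S U : E → Submodule ℝ E} {C lam : ℝ}
    (hsplit : HypSplit f g Λ S U C lam) (hf : Differentiable ℝ f) (hΛ : f '' Λ = Λ)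
    {x : E} (hx : x ∈ Λ) {u : E} (hu : u ∈ U x) (n : ℕ) :
    fderiv ℝ (f^[n]) x u ∈ U (f^[n] x) := by
  induction n with
  | zero => simpa [fderiv_id]
  | succ n ih =>
    rw [fderiv_iterate_succ hf n x]
    have hy : f^[n] x ∈ Λ := iterate_mem_of_image_eq hΛ hx n
    have := hsplit.mapU _ hy
    have hmem : fderiv ℝ f (f^[n] x) (fderiv ℝ (f^[n]) x u) ∈ U (f (f^[n] x)) := by
      rw [← this]
      exact ⟨_, ih, rfl⟩
    simp only [ContinuousLinearMap.comp_apply]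
    rw [Function.iterate_succ_apply']
    exact hmem

lemma expansion {f g : E → E} {Λ : Set E} {S U : E → Submodule ℝ E} {C lam : ℝ}
    (hsplit : HypSplit f g Λ S U C lam) (hf : IsC1Diffeo f g) (hΛ : f '' Λ = Λ)
    {x : E} (hx : x ∈ Λ) {u : E} (hu : u ∈ U x) (n : ℕ) :
    ‖u‖ ≤ C * lam ^ n * ‖fderiv ℝ (f^[n]) x u‖ := by
  have hfd : Differentiable ℝ f := hf.1.differentiable one_ne_zero
  have hgd : Differentiable ℝ g := hf.2.1.differentiable one_ne_zero
  have hy : f^[n] x ∈ Λ := iterate_mem_of_image_eq hΛ hx n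
  have hw : fderiv ℝ (f^[n]) x u ∈ U (f^[n] x) := iterate_mapU hsplit hfd hΛ hx hu n
  have key := hsplit.unstable _ hy _ hw n
  rw [Dfn_neg_natCast] at key
  have hcomp : (fderiv ℝ (g^[n]) (f^[n] x)).comp (fderiv ℝ (f^[n]) x)
      = ContinuousLinearMap.id ℝ E := by
    rw [← fderiv_comp (x := x) (hgd.iterate n _) (hfd.iterate n x)]
    have hid : g^[n] ∘ f^[n] = id := funext fun z => (hf.2.2.1.iterate n) z
    rw [hid, fderiv_id]
  have : fderiv ℝ (g^[n]) (f^[n] x) (fderiv ℝ (f^[n]) x u) = u :=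
    congrArg (fun L : E →L[ℝ] E => L u) hcomp
  rwa [this] at key

end Aux

/-- dynamical characterization of the stable subspace:
`S(x) = {v : sup_{n ≥ 0} ‖Dfⁿ(x)v‖ < ∞}`. -/
theorem stable_subspace_dynamical_characterization
    {E : Type*} [NormedAddCommGroup E] [NormedSpace ℝ E] [FiniteDimensional ℝ E]
    (f g : E → E) (hf : IsC1Diffeo f g)
    (Λ : Set E) (hΛ : f '' Λ = Λ)
    (S U : E → Submodule ℝ E) (C lam : ℝ)
    (hsplit : HypSplit f g Λ S U C lam) :
    ∀ x ∈ Λ,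
      (S x : Set E) = {v : E | BddAbove (Set.range fun n : ℕ => ‖Dfn f g (n : ℤ) x v‖)} := by
  intro x hx
  have hC : (1:ℝ) ≤ C := hsplit.one_le_C
  have hl0 : 0 < lam := hsplit.lam_pos
  have hl1 : lam < 1 := hsplit.lam_lt_one
  ext v
  simp only [SetLike.mem_coe, Set.mem_setOf_eq]
  constructor
  · intro hv
    refine ⟨C * ‖v‖, ?_⟩
    rintro r ⟨n, rfl⟩
    have h1 := hsplit.stable x hx v hv n
    have h2 : lam ^ n ≤ 1 := pow_le_one₀ hl0.le hl1.le
    show ‖Dfn f g (n : ℤ) x v‖ ≤ C * ‖v‖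
    nlinarith [mul_nonneg (mul_nonneg (by linarith : (0:ℝ) ≤ C) (norm_nonneg v))
      (sub_nonneg.mpr h2)]
  · rintro ⟨B, hB⟩
    obtain ⟨s, u, hs, hu, hsu⟩ :=
      Submodule.codisjoint_iff_exists_add_eq.mp (hsplit.isCompl x hx).codisjoint v
    suffices hu0 : u = 0 by
      rw [← hsu, hu0, add_zero]; exact hs
    by_contra hu0
    have hupos : 0 < ‖u‖ := norm_pos_iff.mpr hu0
    have hB0 : 0 ≤ B := le_trans (norm_nonneg _) (hB ⟨0, rfl⟩)
    set K : ℝ := C * (B + C * ‖s‖) with hK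
    have hK0 : 0 ≤ K := by positivity
    obtain ⟨n, hn⟩ := exists_pow_lt_of_lt_one (x := ‖u‖ / (K + 1)) (by positivity) hl1
    -- bound on ‖Dfⁿ u‖
    have hDv : ‖Dfn f g (n : ℤ) x v‖ ≤ B := hB ⟨n, rfl⟩
    have hDs : ‖Dfn f g (n : ℤ) x s‖ ≤ C * lam ^ n * ‖s‖ := hsplit.stable x hx s hs n
    have hDu : ‖Dfn f g (n : ℤ) x u‖ ≤ B + C * ‖s‖ := by
      have hadd : Dfn f g (n : ℤ) x u = Dfn f g (n : ℤ) x v - Dfn f g (n : ℤ) x s := by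
        rw [← hsu]; simp
      have h2 : lam ^ n ≤ 1 := pow_le_one₀ hl0.le hl1.le
      have := norm_nonneg s
      calc ‖Dfn f g (n : ℤ) x u‖
          ≤ ‖Dfn f g (n : ℤ) x v‖ + ‖Dfn f g (n : ℤ) x s‖ := by rw [hadd]; exact norm_sub_le _ _
        _ ≤ B + C * ‖s‖ := by
            nlinarith [mul_nonneg (mul_nonneg (by linarith : (0:ℝ) ≤ C) (norm_nonneg s))
              (sub_nonneg.mpr h2)]
    have hexp : ‖u‖ ≤ C * lam ^ n * ‖fderiv ℝ (f^[n]) x u‖ :=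
      expansion hsplit hf hΛ hx hu n
    rw [← Dfn_natCast f g n x] at hexp
    have hln : 0 < lam ^ n := pow_pos hl0 n
    have : ‖u‖ ≤ lam ^ n * K := by
      calc ‖u‖ ≤ C * lam ^ n * ‖Dfn f g (n : ℤ) x u‖ := hexp
        _ ≤ C * lam ^ n * (B + C * ‖s‖) := by
            apply mul_le_mul_of_nonneg_left hDu (by positivity)
        _ = lam ^ n * K := by ring
    have : lam ^ n * K < ‖u‖ := by
      calc lam ^ n * K ≤ lam ^ n * (K + 1) := by nlinarith
        _ < (‖u‖ / (K + 1)) * (K + 1) := by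
            apply mul_lt_mul_of_pos_right hn (by positivity)
        _ = ‖u‖ := by field_simp
    linarith
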